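/- arXiv:2310.00116 — 5 statements merged into one kernel-verified Lean document; each statement's English description precedes it below -/
import Mathlib

section
/- Let f_y − f_i be L_{yi}-Lipschitz for each i ≠ y with L_{yi} > 0, and suppose f_y(x) > f_i(x) for all i ≠ y. Then any point x̂ with f_y(x̂) ≤ max_{i≠y} f_i(x̂) (i.e., on or beyond the decision boundary) satisfies ‖x − x̂‖ ≥ min_{i≠y} (f_y(x) − f_i(x))/L_{yi}. -/
/-- Distance to the decision boundary is lower bounded by the minimal
Lipschitz-normalized logit gap. -/
theorem boundary_distance_lower_bound {E : Type*} [NormedAddCommGroup E] [NormedSpace ℝ E]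
    (K : ℕ) (hK : 2 ≤ K) (f : E → Fin K → ℝ) (y : Fin K) (L : Fin K → ℝ)
    (hL : ∀ i, i ≠ y → 0 < L i)
    (hLip : ∀ i, i ≠ y → ∀ x x' : E,
      |(f x y - f x i) - (f x' y - f x' i)| ≤ L i * ‖x - x'‖)
    (x : E) (hx : ∀ i, i ≠ y → f x i < f x y)
    (hne : (Finset.univ.erase y).Nonempty)
    (xhat : E)
    (hxhat : f xhat y ≤ (Finset.univ.erase y).sup' hne (fun i => f xhat i)) :
    (Finset.univ.erase y).inf' hne (fun i => (f x y - f x i) / L i) ≤ ‖x - xhat‖ := by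
  obtain ⟨i, hi, hsup⟩ := Finset.exists_mem_eq_sup' hne (fun i => f xhat i)
  have hiy : i ≠ y := Finset.ne_of_mem_erase hi
  have h1 : f xhat y - f xhat i ≤ 0 := by
    rw [hsup] at hxhat; linarith
  have h2 := hLip i hiy x xhat
  have hLi := hL i hiy
  have h3 : f x y - f x i ≤ L i * ‖x - xhat‖ := by
    have := abs_le.mp h2
    linarith [this.2]
  calc (Finset.univ.erase y).inf' hne (fun i => (f x y - f x i) / L i)
      ≤ (f x y - f x i) / L i := Finset.inf'_le _ hi
    _ ≤ ‖x - xhat‖ := (div_le_iff₀ hLi).mpr (by linarith [mul_comm (L i) ‖x - xhat‖])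
end

section
/- Let φ : ℝ → ℝ be slope-restricted in [α, β] with 0 ≤ α ≤ β, applied entrywise as Φ : ℝᵐ → ℝᵐ, and let h(x) = H x + G Φ(W x) with matrices H ∈ ℝ^{p×n}, G ∈ ℝ^{p×m}, W ∈ ℝ^{m×n}. Then h is Lipschitz in ℓ₂ norm with constant L_LT = ‖H + ((α+β)/2) G W‖₂ + ((β−α)/2)·‖G‖₂·‖W‖₂, and moreover L_LT ≤ L_naive := ‖H‖₂ + β·‖G‖₂·‖W‖₂. -/
/-!
Loop transformation: with `c = (α + β) / 2`, the slope restriction says exactly that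
`ψ t = φ t - c t` is `(β - α) / 2`-Lipschitz. Splitting `h x = (H + c G W) x + G Ψ(W x)`
and estimating the two summands separately gives `L_LT`. Since `c ≥ 0`, the triangle
inequality gives `‖H + c G W‖ ≤ ‖H‖ + c ‖G‖ ‖W‖`, and `c + (β - α) / 2 = β` yields `L_LT ≤ L_naive`.
-/

/-- Spectral norm (ℓ₂ operator norm) of a matrix. -/
noncomputable def specNorm {p n : ℕ} (M : Matrix (Fin p) (Fin n) ℝ) : ℝ :=
  ‖LinearMap.toContinuousLinearMap (Matrix.toEuclideanLin M)‖

/-- View a plain vector as an element of Euclidean space. -/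
def eu {n : ℕ} (v : Fin n → ℝ) : EuclideanSpace ℝ (Fin n) := WithLp.toLp 2 v

open Matrix

open scoped Matrix.Norms.L2Operator in
lemma specNorm_eq_norm {p n : ℕ} (M : Matrix (Fin p) (Fin n) ℝ) : specNorm M = ‖M‖ := rfl

lemma norm_eu_mulVec_le {p n : ℕ} (M : Matrix (Fin p) (Fin n) ℝ) (v : Fin n → ℝ) :
    ‖eu (M *ᵥ v)‖ ≤ specNorm M * ‖eu v‖ :=
  M.l2_opNorm_mulVec (eu v)

theorem EuclideanSpace.norm_le_mul_norm_of_forall {𝕜 ι : Type*} [RCLike 𝕜] [Fintype ι]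
    {u v : EuclideanSpace 𝕜 ι} {r : ℝ} (hr : 0 ≤ r) (h : ∀ i, ‖u i‖ ≤ r * ‖v i‖) :
    ‖u‖ ≤ r * ‖v‖ := by
  calc ‖u‖ ≤ ‖r • v‖ := by
        rw [EuclideanSpace.norm_eq, EuclideanSpace.norm_eq]
        gcongr with i
        simpa [norm_smul, abs_of_nonneg hr] using h i
    _ = r * ‖v‖ := by rw [norm_smul, Real.norm_of_nonneg hr]

lemma abs_sub_sub_mul_le_of_slope_mem (φ : ℝ → ℝ) (α β : ℝ)
    (hslope : ∀ a b : ℝ, a ≠ b → α ≤ (φ a - φ b) / (a - b) ∧ (φ a - φ b) / (a - b) ≤ β)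
    (a b : ℝ) :
    |φ a - φ b - (α + β) / 2 * (a - b)| ≤ (β - α) / 2 * |a - b| := by
  rcases eq_or_ne a b with rfl | hab
  · simp
  obtain ⟨hα, hβ⟩ := hslope a b hab
  have hφ : φ a - φ b = (φ a - φ b) / (a - b) * (a - b) :=
    (div_mul_cancel₀ _ (sub_ne_zero.mpr hab)).symm
  rw [hφ, ← sub_mul, abs_mul]
  gcongr
  rw [abs_le]
  constructor <;> linarith

def residualLayer {R ι κ μ : Type*} [CommRing R] [Fintype ι] [Fintype κ]
    (H : Matrix μ ι R) (G : Matrix μ κ R) (W : Matrix κ ι R) (φ : R → R) (x : ι → R) : μ → R :=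
  H *ᵥ x + G *ᵥ fun i => φ ((W *ᵥ x) i)

lemma residualLayer_sub_eq {R ι κ μ : Type*} [CommRing R] [Fintype ι] [Fintype κ]
    (H : Matrix μ ι R) (G : Matrix μ κ R) (W : Matrix κ ι R) (φ : R → R) (c : R) (x x' : ι → R) :
    residualLayer H G W φ x - residualLayer H G W φ x' =
      (H + c • (G * W)) *ᵥ (x - x') +
        G *ᵥ fun i => φ ((W *ᵥ x) i) - φ ((W *ᵥ x') i) - c * (W *ᵥ (x - x')) i := by
  have hG : (G *ᵥ fun i => φ ((W *ᵥ x) i) - φ ((W *ᵥ x') i) - c * (W *ᵥ (x - x')) i) =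
      (G *ᵥ fun i => φ ((W *ᵥ x) i)) - (G *ᵥ fun i => φ ((W *ᵥ x') i)) -
        c • G *ᵥ W *ᵥ (x - x') := by
    rw [← mulVec_smul, ← mulVec_sub, ← mulVec_sub]
    rfl
  rw [hG, add_mulVec, smul_mulVec, ← mulVec_mulVec, mulVec_sub H, residualLayer, residualLayer]
  abel

lemma norm_eu_residualLayer_sub_le {p n m : ℕ} (H : Matrix (Fin p) (Fin n) ℝ)
    (G : Matrix (Fin p) (Fin m) ℝ) (W : Matrix (Fin m) (Fin n) ℝ) (φ : ℝ → ℝ) {c r : ℝ}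
    (hr : 0 ≤ r) (hφ : ∀ a b, |φ a - φ b - c * (a - b)| ≤ r * |a - b|) (x x' : Fin n → ℝ) :
    ‖eu (residualLayer H G W φ x) - eu (residualLayer H G W φ x')‖ ≤
      (specNorm (H + c • (G * W)) + r * specNorm G * specNorm W) * ‖eu (x - x')‖ := by
  set u : Fin m → ℝ := fun i => φ ((W *ᵥ x) i) - φ ((W *ᵥ x') i) - c * (W *ᵥ (x - x')) i
  have hu : ‖eu u‖ ≤ r * (specNorm W * ‖eu (x - x')‖) :=
    calc ‖eu u‖ ≤ r * ‖eu (W *ᵥ (x - x'))‖ :=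
          EuclideanSpace.norm_le_mul_norm_of_forall hr fun i => by
            simpa [u, eu, mulVec_sub] using hφ ((W *ᵥ x) i) ((W *ᵥ x') i)
      _ ≤ r * (specNorm W * ‖eu (x - x')‖) := by gcongr; exact norm_eu_mulVec_le W _
  calc ‖eu (residualLayer H G W φ x) - eu (residualLayer H G W φ x')‖
      = ‖eu ((H + c • (G * W)) *ᵥ (x - x')) + eu (G *ᵥ u)‖ := by
        simp only [eu, ← WithLp.toLp_sub, ← WithLp.toLp_add, residualLayer_sub_eq H G W φ c, u]
    _ ≤ specNorm (H + c • (G * W)) * ‖eu (x - x')‖ + specNorm G * ‖eu u‖ :=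
        norm_add_le_of_le (norm_eu_mulVec_le _ _) (norm_eu_mulVec_le _ _)
    _ ≤ specNorm (H + c • (G * W)) * ‖eu (x - x')‖ +
          specNorm G * (r * (specNorm W * ‖eu (x - x')‖)) := by
        gcongr; exact norm_nonneg _
    _ = (specNorm (H + c • (G * W)) + r * specNorm G * specNorm W) * ‖eu (x - x')‖ := by ring

open scoped Matrix.Norms.L2Operator in
lemma specNorm_add_smul_mul_le {p n m : ℕ} (H : Matrix (Fin p) (Fin n) ℝ)
    (G : Matrix (Fin p) (Fin m) ℝ) (W : Matrix (Fin m) (Fin n) ℝ) (c : ℝ) :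
    specNorm (H + c • (G * W)) ≤ specNorm H + |c| * specNorm G * specNorm W := by
  simp only [specNorm_eq_norm]
  calc ‖H + c • (G * W)‖ ≤ ‖H‖ + |c| * ‖G * W‖ := by
        grw [norm_add_le, norm_smul, Real.norm_eq_abs]
    _ ≤ ‖H‖ + |c| * ‖G‖ * ‖W‖ := by grw [mul_assoc, l2_opNorm_mul]

/-- Loop-transformed Lipschitz bound for a residual layer `h(x) = Hx + GΦ(Wx)`,
and its improvement over the naive bound. -/
theorem loop_transform_layer_bound {n m p : ℕ} (φ : ℝ → ℝ) (α β : ℝ)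
    (hα : 0 ≤ α) (hαβ : α ≤ β)
    (hslope : ∀ a b : ℝ, a ≠ b → α ≤ (φ a - φ b) / (a - b) ∧ (φ a - φ b) / (a - b) ≤ β)
    (H : Matrix (Fin p) (Fin n) ℝ) (G : Matrix (Fin p) (Fin m) ℝ)
    (W : Matrix (Fin m) (Fin n) ℝ) :
    (∀ x x' : EuclideanSpace ℝ (Fin n),
      ‖eu (H.mulVec x + G.mulVec (fun i => φ (W.mulVec x i))) -
        eu (H.mulVec x' + G.mulVec (fun i => φ (W.mulVec x' i)))‖ ≤
      (specNorm (H + ((α + β) / 2) • (G * W)) + (β - α) / 2 * specNorm G * specNorm W) *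
        ‖x - x'‖) ∧
    specNorm (H + ((α + β) / 2) • (G * W)) + (β - α) / 2 * specNorm G * specNorm W ≤
      specNorm H + β * specNorm G * specNorm W := by
  refine ⟨fun x x' => ?_, ?_⟩
  · exact norm_eu_residualLayer_sub_le H G W φ (by linarith)
      (abs_sub_sub_mul_le_of_slope_mem φ α β hslope) x x'
  · have hc : |(α + β) / 2| = (α + β) / 2 := abs_of_nonneg (by linarith)
    have := specNorm_add_smul_mul_le H G W ((α + β) / 2)
    rw [hc] at this
    linarith
end

section
/- Let W ∈ ℝ^{m×n}, T ∈ ℝ^{m×m} diagonal positive definite, ρ > 0, 0 ≤ α ≤ β, and suppose WWᵀ ⪯ (2ρ/(α+β)²)·T^{−1}. Then h(x) = √ρ·x − ((α+β)/√ρ)·Wᵀ T Φ(W x) is √ρ-Lipschitz in ℓ₂ norm, where Φ applies a scalar function slope-restricted in [α, β] entrywise. -/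
/-! With `u = x - x'`, `Δ = Φ(Wx) - Φ(Wx')` and `y = WᵀTΔ`, expanding the square gives
`‖h x - h x'‖² = ρ‖u‖² - 2(α+β)⟪u, y⟫ + ((α+β)²/ρ)‖y‖²`, so it suffices that
`(α+β)²‖y‖² ≤ 2ρ(α+β)⟪u, y⟫`. The Loewner bound gives `‖y‖² ≤ (2ρ/(α+β)²) ΔᵀTΔ`. The slope
restriction gives `Δᵢ² ≤ (α+β)(Wu)ᵢΔᵢ` entrywise, and as `T` is diagonal with positive entries
this sums to `ΔᵀTΔ ≤ (α+β)(Wu)ᵀTΔ = (α+β)⟪u, y⟫`. -/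

open Matrix

/-- View an element of Euclidean space as a plain vector. -/
def pl {n : ℕ} (v : EuclideanSpace ℝ (Fin n)) : Fin n → ℝ := v

open scoped RealInnerProductSpace

theorem sq_sub_le_of_slope_mem {φ : ℝ → ℝ} {α β : ℝ} (hα : 0 ≤ α)
    (hslope : ∀ a b : ℝ, a ≠ b → α ≤ (φ a - φ b) / (a - b) ∧ (φ a - φ b) / (a - b) ≤ β)
    (a b : ℝ) : (φ a - φ b) ^ 2 ≤ (α + β) * ((a - b) * (φ a - φ b)) := by
  rcases eq_or_ne a b with rfl | hab
  · simp
  obtain ⟨hαs, hsβ⟩ := hslope a b hab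
  set s := (φ a - φ b) / (a - b)
  have hφ : φ a - φ b = s * (a - b) := (div_mul_cancel₀ _ (sub_ne_zero.mpr hab)).symm
  have : 0 ≤ (a - b) ^ 2 * (s * (α + β - s)) :=
    mul_nonneg (sq_nonneg _) (mul_nonneg (hα.trans hαs) (by linarith))
  rw [hφ]
  linear_combination this

theorem dotProduct_diagonal_mulVec_le {ι : Type*} [Fintype ι] [DecidableEq ι]
    {t z v : ι → ℝ} {γ : ℝ} (ht : ∀ i, 0 ≤ t i) (h : ∀ i, v i ^ 2 ≤ γ * (z i * v i)) :
    v ⬝ᵥ (diagonal t *ᵥ v) ≤ γ * (z ⬝ᵥ (diagonal t *ᵥ v)) := by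
  simp only [dotProduct, mulVec_diagonal, Finset.mul_sum]
  refine Finset.sum_le_sum fun i _ => ?_
  linear_combination mul_le_mul_of_nonneg_left (h i) (ht i)

theorem norm_smul_sub_smul_le {E : Type*} [NormedAddCommGroup E] [InnerProductSpace ℝ E]
    {ρ γ : ℝ} (hρ : 0 < ρ) {u y : E} (h : γ ^ 2 * ‖y‖ ^ 2 ≤ 2 * ρ * γ * ⟪u, y⟫) :
    ‖√ρ • u - (γ / √ρ) • y‖ ≤ √ρ * ‖u‖ := by
  have hsρ : 0 < √ρ := Real.sqrt_pos.mpr hρ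
  have hexpand : ‖√ρ • u - (γ / √ρ) • y‖ ^ 2 =
      ρ * ‖u‖ ^ 2 - 2 * γ * ⟪u, y⟫ + γ ^ 2 / ρ * ‖y‖ ^ 2 := by
    rw [norm_sub_sq_real, norm_smul, norm_smul, real_inner_smul_left, real_inner_smul_right,
      Real.norm_of_nonneg hsρ.le, Real.norm_eq_abs, mul_pow, mul_pow, sq_abs, div_pow,
      Real.sq_sqrt hρ.le]
    field_simp
  have hcross : γ ^ 2 / ρ * ‖y‖ ^ 2 ≤ 2 * γ * ⟪u, y⟫ := by
    rw [div_mul_eq_mul_div, div_le_iff₀ hρ]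
    linarith
  rw [← sq_le_sq₀ (norm_nonneg _) (by positivity), hexpand, mul_pow, Real.sq_sqrt hρ.le]
  linarith

theorem Matrix.PosSemidef.transpose_mulVec_dotProduct_self_le {ι κ : Type*} [Fintype ι]
    [Fintype κ] [DecidableEq κ] {k : ℝ} {W : Matrix κ ι ℝ} {T : Matrix κ κ ℝ} (hT : IsUnit T)
    (h : (k • T⁻¹ - W * Wᵀ).PosSemidef) (v : κ → ℝ) :
    (Wᵀ *ᵥ (T *ᵥ v)) ⬝ᵥ (Wᵀ *ᵥ (T *ᵥ v)) ≤ k * (v ⬝ᵥ (T *ᵥ v)) := by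
  have hinv : T⁻¹ *ᵥ (T *ᵥ v) = v := by
    rw [mulVec_mulVec, nonsing_inv_mul T ((isUnit_iff_isUnit_det T).mp hT), one_mulVec]
  have := h.dotProduct_mulVec_nonneg (T *ᵥ v)
  rw [star_trivial, sub_mulVec, smul_mulVec, hinv, dotProduct_sub, dotProduct_smul,
    ← mulVec_mulVec, dotProduct_mulVec, ← mulVec_transpose, dotProduct_comm (T *ᵥ v) v] at this
  simpa [smul_eq_mul] using this

theorem sq_mul_dotProduct_self_le_of_posSemidef {ι κ : Type*} [Fintype ι] [Fintype κ]
    [DecidableEq κ] {ρ γ : ℝ} (hρ : 0 ≤ ρ) {W : Matrix κ ι ℝ} {t : κ → ℝ} (ht : ∀ i, 0 < t i)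
    (hW : ((2 * ρ / γ ^ 2) • (diagonal t)⁻¹ - W * Wᵀ).PosSemidef) {u : ι → ℝ} {v : κ → ℝ}
    (hv : ∀ i, v i ^ 2 ≤ γ * ((W *ᵥ u) i * v i)) :
    γ ^ 2 * ((Wᵀ *ᵥ (diagonal t *ᵥ v)) ⬝ᵥ (Wᵀ *ᵥ (diagonal t *ᵥ v))) ≤
      2 * ρ * γ * (u ⬝ᵥ (Wᵀ *ᵥ (diagonal t *ᵥ v))) := by
  have hgram := hW.transpose_mulVec_dotProduct_self_le ((posDef_diagonal_iff.mpr ht).isUnit) v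
  have hslope := dotProduct_diagonal_mulVec_le (fun i => (ht i).le) hv
  rw [dotProduct_mulVec u, vecMul_transpose]
  rcases eq_or_ne γ 0 with rfl | hγ
  · simp
  calc γ ^ 2 * ((Wᵀ *ᵥ (diagonal t *ᵥ v)) ⬝ᵥ (Wᵀ *ᵥ (diagonal t *ᵥ v)))
      ≤ γ ^ 2 * (2 * ρ / γ ^ 2 * (v ⬝ᵥ (diagonal t *ᵥ v))) := by gcongr
    _ = 2 * ρ * (v ⬝ᵥ (diagonal t *ᵥ v)) := by field_simp
    _ ≤ 2 * ρ * γ * ((W *ᵥ u) ⬝ᵥ (diagonal t *ᵥ v)) := by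
      rw [mul_assoc _ γ]
      gcongr

theorem rho_lipschitz_layer_general {n m : ℕ} (φ : ℝ → ℝ) (α β ρ : ℝ)
    (hα : 0 ≤ α) (hρ : 0 < ρ)
    (hslope : ∀ a b : ℝ, a ≠ b → α ≤ (φ a - φ b) / (a - b) ∧ (φ a - φ b) / (a - b) ≤ β)
    (W : Matrix (Fin m) (Fin n) ℝ) (T : Matrix (Fin m) (Fin m) ℝ)
    (hTdiag : T.IsDiag) (hTpd : T.PosDef)
    (hW : ((2 * ρ / (α + β) ^ 2) • T⁻¹ - W * Wᵀ).PosSemidef) :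
    ∀ x x' : EuclideanSpace ℝ (Fin n),
      ‖eu ((Real.sqrt ρ • pl x -
            ((α + β) / Real.sqrt ρ) • Wᵀ.mulVec (T.mulVec (fun i => φ (W.mulVec (pl x) i)))) -
           (Real.sqrt ρ • pl x' -
            ((α + β) / Real.sqrt ρ) • Wᵀ.mulVec (T.mulVec (fun i => φ (W.mulVec (pl x') i)))))‖ ≤
      Real.sqrt ρ * ‖x - x'‖ := by
  intro x x'
  obtain ⟨t, rfl⟩ : ∃ t, T = diagonal t := ⟨T.diag, hTdiag.diagonal_diag.symm⟩
  set Δ : Fin m → ℝ := fun i => φ ((W *ᵥ pl x) i) - φ ((W *ᵥ pl x') i)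
  set y := Wᵀ *ᵥ (diagonal t *ᵥ Δ)
  have hlayer : eu ((√ρ • pl x -
        ((α + β) / √ρ) • Wᵀ *ᵥ (diagonal t *ᵥ fun i => φ ((W *ᵥ pl x) i))) -
      (√ρ • pl x' - ((α + β) / √ρ) • Wᵀ *ᵥ (diagonal t *ᵥ fun i => φ ((W *ᵥ pl x') i)))) =
      √ρ • (x - x') - ((α + β) / √ρ) • eu y := by
    have hΔ : (fun i => φ ((W *ᵥ pl x) i)) - (fun i => φ ((W *ᵥ pl x') i)) = Δ := rfl
    rw [sub_sub_sub_comm, ← smul_sub, ← smul_sub, ← mulVec_sub, ← mulVec_sub, hΔ]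
    rfl
  have hnorm : ‖eu y‖ ^ 2 = y ⬝ᵥ y := by
    rw [← real_inner_self_eq_norm_sq, eu, EuclideanSpace.inner_toLp_toLp, star_trivial]
  have hinner : ⟪x - x', eu y⟫ = pl (x - x') ⬝ᵥ y := by
    rw [EuclideanSpace.inner_eq_star_dotProduct, star_trivial, dotProduct_comm]
    rfl
  rw [hlayer]
  refine norm_smul_sub_smul_le hρ ?_
  rw [hnorm, hinner]
  refine sq_mul_dotProduct_self_le_of_posSemidef hρ.le (posDef_diagonal_iff.mp hTpd) hW
    fun i => ?_
  rw [show pl (x - x') = pl x - pl x' from rfl, mulVec_sub]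
  exact sq_sub_le_of_slope_mem hα hslope _ _

/-- Proposition 2: if `WWᵀ ⪯ (2ρ/(α+β)²)·T⁻¹` with `T` diagonal positive definite,
then `h(x) = √ρ·x − ((α+β)/√ρ)·WᵀTΦ(Wx)` is `√ρ`-Lipschitz in ℓ₂ norm. -/
theorem rho_lipschitz_layer {n m : ℕ} (φ : ℝ → ℝ) (α β ρ : ℝ)
    (hα : 0 ≤ α) (hαβ : α ≤ β) (hρ : 0 < ρ)
    (hslope : ∀ a b : ℝ, a ≠ b → α ≤ (φ a - φ b) / (a - b) ∧ (φ a - φ b) / (a - b) ≤ β)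
    (W : Matrix (Fin m) (Fin n) ℝ) (T : Matrix (Fin m) (Fin m) ℝ)
    (hTdiag : T.IsDiag) (hTpd : T.PosDef)
    (hW : ((2 * ρ / (α + β) ^ 2) • T⁻¹ - W * Wᵀ).PosSemidef) :
    ∀ x x' : EuclideanSpace ℝ (Fin n),
      ‖eu ((Real.sqrt ρ • pl x -
            ((α + β) / Real.sqrt ρ) • Wᵀ.mulVec (T.mulVec (fun i => φ (W.mulVec (pl x) i)))) -
           (Real.sqrt ρ • pl x' -
            ((α + β) / Real.sqrt ρ) • Wᵀ.mulVec (T.mulVec (fun i => φ (W.mulVec (pl x') i)))))‖ ≤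
      Real.sqrt ρ * ‖x - x'‖ :=
  rho_lipschitz_layer_general φ α β ρ hα hρ hslope W T hTdiag hTpd hW
end

section
/- For a single hidden layer network h(x) = W¹Φ(W⁰x) with Φ entrywise slope-restricted in [α, β] (0 ≤ α ≤ β): if there exist ρ > 0 and a diagonal positive semidefinite matrix T such that the block matrix M = [[−2αβ(W⁰)ᵀTW⁰ − ρI, (α+β)(W⁰)ᵀT], [(α+β)TW⁰, −2T + (W¹)ᵀW¹]] is negative semidefinite, then ‖h(x) − h(y)‖₂ ≤ √ρ·‖x − y‖₂ for all x, y. -/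
open Matrix

/-!
Write `d = x - y`, `u = W⁰d` and `q = Φ(W⁰x) - Φ(W⁰y)`. The slope restriction says that each
`qᵢ` lies between `α uᵢ` and `β uᵢ`, i.e. `(qᵢ - α uᵢ)(qᵢ - β uᵢ) ≤ 0`; weighting these by
`Tᵢᵢ ≥ 0` and summing gives `qᵀTq - (α+β) uᵀTq + αβ uᵀTu ≤ 0`. Evaluating the negative
semidefinite block matrix at the stacked vector `(d, q)` gives
`‖W¹q‖² ≤ ρ ‖d‖² + 2 (qᵀTq - (α+β) uᵀTq + αβ uᵀTu) ≤ ρ ‖d‖²`.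
-/

lemma norm_eu {n : ℕ} (v : Fin n → ℝ) : ‖eu v‖ = √(v ⬝ᵥ v) := by
  simp [EuclideanSpace.norm_eq, eu, dotProduct, sq]

lemma sector_mul_nonpos_of_slope {φ : ℝ → ℝ} {α β : ℝ}
    (hslope : ∀ a b : ℝ, a ≠ b → α ≤ (φ a - φ b) / (a - b) ∧ (φ a - φ b) / (a - b) ≤ β)
    (a b : ℝ) : (φ a - φ b - α * (a - b)) * (φ a - φ b - β * (a - b)) ≤ 0 := by
  rcases eq_or_ne a b with rfl | hab
  · simp
  obtain ⟨hα, hβ⟩ := hslope a b hab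
  set s := (φ a - φ b) / (a - b)
  have hs : φ a - φ b = s * (a - b) := (div_mul_cancel₀ _ (sub_ne_zero.2 hab)).symm
  calc (φ a - φ b - α * (a - b)) * (φ a - φ b - β * (a - b))
      = (s - α) * (s - β) * (a - b) ^ 2 := by rw [hs]; ring
    _ ≤ 0 := mul_nonpos_of_nonpos_of_nonneg
        (mul_nonpos_of_nonneg_of_nonpos (sub_nonneg.2 hα) (sub_nonpos.2 hβ)) (sq_nonneg _)

lemma sector_quadForm_nonpos_of_isDiag {ι : Type*} [Fintype ι] {T : Matrix ι ι ℝ}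
    (hTdiag : T.IsDiag) (hTpsd : T.PosSemidef) {α β : ℝ} (u q : ι → ℝ)
    (hsector : ∀ i, (q i - α * u i) * (q i - β * u i) ≤ 0) :
    q ⬝ᵥ T *ᵥ q - (α + β) * (u ⬝ᵥ T *ᵥ q) + α * β * (u ⬝ᵥ T *ᵥ u) ≤ 0 := by
  classical
  rw [← hTdiag.diagonal_diag]
  calc q ⬝ᵥ diagonal T.diag *ᵥ q - (α + β) * (u ⬝ᵥ diagonal T.diag *ᵥ q)
        + α * β * (u ⬝ᵥ diagonal T.diag *ᵥ u)
      = ∑ i, T i i * ((q i - α * u i) * (q i - β * u i)) := by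
        simp only [dotProduct, mulVec_diagonal, diag_apply, Finset.mul_sum,
          ← Finset.sum_sub_distrib, ← Finset.sum_add_distrib]
        exact Finset.sum_congr rfl fun i _ => by ring
    _ ≤ 0 := Finset.sum_nonpos fun i _ =>
        mul_nonpos_of_nonneg_of_nonpos hTpsd.diag_nonneg (hsector i)

lemma sumElim_dotProduct_fromBlocks_mulVec_sumElim {l m R : Type*} [Fintype l] [Fintype m]
    [CommSemiring R] (A : Matrix l l R) (B : Matrix l m R) (C : Matrix m l R) (D : Matrix m m R)
    (x : l → R) (y : m → R) :
    Sum.elim x y ⬝ᵥ fromBlocks A B C D *ᵥ Sum.elim x y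
      = x ⬝ᵥ A *ᵥ x + x ⬝ᵥ B *ᵥ y + (y ⬝ᵥ C *ᵥ x + y ⬝ᵥ D *ᵥ y) := by
  simp [fromBlocks_mulVec, sumElim_dotProduct_sumElim, dotProduct_add]

lemma quadratic_bound_of_lmi {n m p : Type*} [Fintype n] [Fintype m] [Fintype p]
    [DecidableEq n]
    {W0 : Matrix m n ℝ} {W1 : Matrix p m ℝ} {T : Matrix m m ℝ} (hT : Tᵀ = T) {α β ρ : ℝ}
    (hM : (-(fromBlocks
        ((-2 * α * β) • (W0ᵀ * T * W0) - ρ • (1 : Matrix n n ℝ))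
        ((α + β) • (W0ᵀ * T))
        ((α + β) • (T * W0))
        ((-2 : ℝ) • T + W1ᵀ * W1))).PosSemidef) (d : n → ℝ) (q : m → ℝ) :
    (W1 *ᵥ q) ⬝ᵥ (W1 *ᵥ q) ≤ ρ * (d ⬝ᵥ d) + 2 * (q ⬝ᵥ T *ᵥ q
      - (α + β) * ((W0 *ᵥ d) ⬝ᵥ T *ᵥ q) + α * β * ((W0 *ᵥ d) ⬝ᵥ T *ᵥ (W0 *ᵥ d))) := by
  have hz := hM.dotProduct_mulVec_nonneg (Sum.elim d q)
  rw [star_trivial, fromBlocks_neg, sumElim_dotProduct_fromBlocks_mulVec_sumElim] at hz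
  have hTWW : d ⬝ᵥ (W0ᵀ * T * W0) *ᵥ d = (W0 *ᵥ d) ⬝ᵥ T *ᵥ (W0 *ᵥ d) := by
    rw [Matrix.mul_assoc, ← mulVec_mulVec, dotProduct_mulVec, vecMul_transpose, mulVec_mulVec]
  have hWT : d ⬝ᵥ (W0ᵀ * T) *ᵥ q = (W0 *ᵥ d) ⬝ᵥ T *ᵥ q := by
    rw [← mulVec_mulVec, dotProduct_mulVec, vecMul_transpose]
  have hTW : q ⬝ᵥ (T * W0) *ᵥ d = (W0 *ᵥ d) ⬝ᵥ T *ᵥ q := by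
    rw [← mulVec_mulVec, dotProduct_mulVec, ← hT, vecMul_transpose, dotProduct_comm, hT]
  have hWW : q ⬝ᵥ (W1ᵀ * W1) *ᵥ q = (W1 *ᵥ q) ⬝ᵥ (W1 *ᵥ q) := by
    rw [← mulVec_mulVec, dotProduct_mulVec, vecMul_transpose]
  simp only [neg_mulVec, sub_mulVec, add_mulVec, smul_mulVec, one_mulVec, dotProduct_add,
    dotProduct_neg, dotProduct_sub, dotProduct_smul, smul_eq_mul, hTWW, hWT, hTW, hWW] at hz
  linear_combination hz

theorem lipsdp_one_layer_general {n m p : ℕ} (φ : ℝ → ℝ) (α β ρ : ℝ)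
    (hslope : ∀ a b : ℝ, a ≠ b → α ≤ (φ a - φ b) / (a - b) ∧ (φ a - φ b) / (a - b) ≤ β)
    (W0 : Matrix (Fin m) (Fin n) ℝ) (W1 : Matrix (Fin p) (Fin m) ℝ)
    (T : Matrix (Fin m) (Fin m) ℝ) (hTdiag : T.IsDiag) (hTpsd : T.PosSemidef)
    (hM : (-(Matrix.fromBlocks
        ((-2 * α * β) • (W0ᵀ * T * W0) - ρ • (1 : Matrix (Fin n) (Fin n) ℝ))
        ((α + β) • (W0ᵀ * T))
        ((α + β) • (T * W0))
        ((-2 : ℝ) • T + W1ᵀ * W1))).PosSemidef) :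
    ∀ x y : EuclideanSpace ℝ (Fin n),
      ‖eu (W1.mulVec (fun i => φ (W0.mulVec (pl x) i)) -
           W1.mulVec (fun i => φ (W0.mulVec (pl y) i)))‖ ≤
        Real.sqrt ρ * ‖x - y‖ := by
  intro x y
  set d := pl x - pl y
  set q : Fin m → ℝ := fun i => φ ((W0 *ᵥ pl x) i) - φ ((W0 *ᵥ pl y) i)
  have hsector := sector_quadForm_nonpos_of_isDiag hTdiag hTpsd (W0 *ᵥ d) q fun i => by
    simpa [d, q, mulVec_sub] using
      sector_mul_nonpos_of_slope hslope ((W0 *ᵥ pl x) i) ((W0 *ᵥ pl y) i)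
  have hquad := quadratic_bound_of_lmi hTdiag.isSymm.eq hM d q
  rw [← mulVec_sub]
  calc ‖eu (W1 *ᵥ q)‖ = √((W1 *ᵥ q) ⬝ᵥ (W1 *ᵥ q)) := norm_eu _
    _ ≤ √(ρ * (d ⬝ᵥ d)) := Real.sqrt_le_sqrt (by linarith)
    _ = √ρ * ‖x - y‖ := by
      rw [Real.sqrt_mul' _ (by simpa using dotProduct_self_star_nonneg d), ← norm_eu]
      rfl

/-- LipSDP (Theorem 1): if the block LMI is negative semidefinite for some `ρ > 0`
and diagonal PSD `T`, then `h(x) = W¹Φ(W⁰x)` is `√ρ`-Lipschitz in ℓ₂ norm. -/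
theorem lipsdp_one_layer {n m p : ℕ} (φ : ℝ → ℝ) (α β ρ : ℝ)
    (hα : 0 ≤ α) (hαβ : α ≤ β) (hρ : 0 < ρ)
    (hslope : ∀ a b : ℝ, a ≠ b → α ≤ (φ a - φ b) / (a - b) ∧ (φ a - φ b) / (a - b) ≤ β)
    (W0 : Matrix (Fin m) (Fin n) ℝ) (W1 : Matrix (Fin p) (Fin m) ℝ)
    (T : Matrix (Fin m) (Fin m) ℝ) (hTdiag : T.IsDiag) (hTpsd : T.PosSemidef)
    (hM : (-(Matrix.fromBlocks
        ((-2 * α * β) • (W0ᵀ * T * W0) - ρ • (1 : Matrix (Fin n) (Fin n) ℝ))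
        ((α + β) • (W0ᵀ * T))
        ((α + β) • (T * W0))
        ((-2 : ℝ) • T + W1ᵀ * W1))).PosSemidef) :
    ∀ x y : EuclideanSpace ℝ (Fin n),
      ‖eu (W1.mulVec (fun i => φ (W0.mulVec (pl x) i)) -
           W1.mulVec (fun i => φ (W0.mulVec (pl y) i)))‖ ≤
        Real.sqrt ρ * ‖x - y‖ :=
  lipsdp_one_layer_general φ α β ρ hslope W0 W1 T hTdiag hTpsd hM
end

section
/- Let φ be slope-restricted in [α, β]. For any diagonal matrix T with nonnegative entries and any u, v ∈ ℝᵐ, with p := Φ(u) − Φ(v): ∑_i T_ii (p_i − α(u_i − v_i))(p_i − β(u_i − v_i)) ≤ 0, equivalently the quadratic form [u−v; p]ᵀ [[−2αβT, (α+β)T],[(α+β)T, −2T]] [u−v; p] ≥ 0. -/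
/-!
Writing `φ a - φ b = s (a - b)` with the difference quotient `s ∈ [α, β]`, each summand is
`T i (s - α)(s - β)(a - b)² ≤ 0`; the block quadratic form is `-2` times the sum.
-/

open Matrix

theorem mul_sub_mul_sub_nonpos_of_mem_Icc {s α β : ℝ} (hs : s ∈ Set.Icc α β) (d : ℝ) :
    (s * d - α * d) * (s * d - β * d) ≤ 0 := by
  have hsα : 0 ≤ s - α := sub_nonneg.mpr hs.1
  have hsβ : s - β ≤ 0 := sub_nonpos.mpr hs.2
  calc (s * d - α * d) * (s * d - β * d) = (s - α) * (s - β) * d ^ 2 := by ring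
    _ ≤ 0 := mul_nonpos_of_nonpos_of_nonneg (mul_nonpos_of_nonneg_of_nonpos hsα hsβ) (sq_nonneg d)

theorem incremental_sector_bound_of_slope_bounds {φ : ℝ → ℝ} {α β : ℝ}
    (hslope : ∀ a b : ℝ, a ≠ b → α ≤ (φ a - φ b) / (a - b) ∧ (φ a - φ b) / (a - b) ≤ β)
    (a b : ℝ) :
    ((φ a - φ b) - α * (a - b)) * ((φ a - φ b) - β * (a - b)) ≤ 0 := by
  rcases eq_or_ne a b with rfl | hab
  · simp
  · have hΔ : φ a - φ b = (φ a - φ b) / (a - b) * (a - b) :=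
      (div_mul_cancel₀ _ (sub_ne_zero.mpr hab)).symm
    rw [hΔ]
    exact mul_sub_mul_sub_nonpos_of_mem_Icc (hslope a b hab) (a - b)

theorem sumElim_dotProduct_fromBlocks_diagonal_mulVec {ι : Type*} [Fintype ι] [DecidableEq ι]
    (α β : ℝ) (T x y : ι → ℝ) :
    Sum.elim x y ⬝ᵥ
        (fromBlocks ((-2 * α * β) • diagonal T) ((α + β) • diagonal T)
          ((α + β) • diagonal T) ((-2 : ℝ) • diagonal T) *ᵥ Sum.elim x y) =
      -2 * ∑ i, T i * (y i - α * x i) * (y i - β * x i) := by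
  rw [fromBlocks_mulVec, Sum.elim_comp_inl, Sum.elim_comp_inr, sumElim_dotProduct_sumElim]
  simp only [smul_mulVec, mulVec_diagonal, dotProduct, Pi.add_apply, Pi.smul_apply, smul_eq_mul,
    Finset.mul_sum, ← Finset.sum_add_distrib]
  exact Finset.sum_congr rfl fun i _ => by ring

theorem slope_restricted_quadratic_constraint_general {m : ℕ} (φ : ℝ → ℝ) (α β : ℝ)
    (hslope : ∀ a b : ℝ, a ≠ b → α ≤ (φ a - φ b) / (a - b) ∧ (φ a - φ b) / (a - b) ≤ β)
    (T : Fin m → ℝ) (hT : ∀ i, 0 ≤ T i) (u v : Fin m → ℝ) :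
    (∑ i, T i * ((φ (u i) - φ (v i)) - α * (u i - v i)) *
        ((φ (u i) - φ (v i)) - β * (u i - v i)) ≤ 0) ∧
    0 ≤ dotProduct
        (Sum.elim (u - v) (fun i => φ (u i) - φ (v i)))
        ((Matrix.fromBlocks
            ((-2 * α * β) • Matrix.diagonal T) ((α + β) • Matrix.diagonal T)
            ((α + β) • Matrix.diagonal T) ((-2 : ℝ) • Matrix.diagonal T)).mulVec
          (Sum.elim (u - v) (fun i => φ (u i) - φ (v i)))) := by
  have hsum : ∑ i, T i * ((φ (u i) - φ (v i)) - α * (u i - v i)) *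
      ((φ (u i) - φ (v i)) - β * (u i - v i)) ≤ 0 :=
    Finset.sum_nonpos fun i _ => by
      rw [mul_assoc]
      exact mul_nonpos_of_nonneg_of_nonpos (hT i)
        (incremental_sector_bound_of_slope_bounds hslope (u i) (v i))
  refine ⟨hsum, ?_⟩
  rw [sumElim_dotProduct_fromBlocks_diagonal_mulVec]
  simp only [Pi.sub_apply]
  linarith

/-- Incremental quadratic constraint for entrywise slope-restricted nonlinearities:
the weighted sum `∑ T_i (p_i − α(u_i−v_i))(p_i − β(u_i−v_i))` is nonpositive, and
equivalently the associated block quadratic form is nonnegative. -/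
theorem slope_restricted_quadratic_constraint {m : ℕ} (φ : ℝ → ℝ) (α β : ℝ)
    (hαβ : α ≤ β)
    (hslope : ∀ a b : ℝ, a ≠ b → α ≤ (φ a - φ b) / (a - b) ∧ (φ a - φ b) / (a - b) ≤ β)
    (T : Fin m → ℝ) (hT : ∀ i, 0 ≤ T i) (u v : Fin m → ℝ) :
    (∑ i, T i * ((φ (u i) - φ (v i)) - α * (u i - v i)) *
        ((φ (u i) - φ (v i)) - β * (u i - v i)) ≤ 0) ∧
    0 ≤ dotProduct
        (Sum.elim (u - v) (fun i => φ (u i) - φ (v i)))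
        ((Matrix.fromBlocks
            ((-2 * α * β) • Matrix.diagonal T) ((α + β) • Matrix.diagonal T)
            ((α + β) • Matrix.diagonal T) ((-2 : ℝ) • Matrix.diagonal T)).mulVec
          (Sum.elim (u - v) (fun i => φ (u i) - φ (v i)))) :=
  slope_restricted_quadratic_constraint_general φ α β hslope T hT u v
end
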